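/- arXiv:1406.5471 — 8 statements merged into one kernel-verified Lean document; each statement's English description precedes it below -/
import Mathlib

section
/- For all real numbers a, b with a, b ≥ 0, the product over the four sign choices satisfies ∏_{s₁,s₂ ∈ {±1}} (a^{3/2} + s₁·b^{3/2} + s₂·(a+b)^{3/2}) = a²b²(9a² + 14ab + 9b²). Equivalently, for ξ, η ≤ 0, ∏_{s₁,s₂ ∈ {±1}} (|ξ|^{3/2} + s₁|η|^{3/2} + s₂|ξ+η|^{3/2}) = ξ²η²(9ξ² + 14ξη + 9η²). -/
open Real Finset

lemma sq_rpow_three_halves {a : ℝ} (ha : 0 ≤ a) :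
    a ^ ((3 : ℝ)/2) * a ^ ((3 : ℝ)/2) = a ^ 3 := by
  rw [← Real.rpow_add' ha (by norm_num),
    show (3:ℝ)/2 + 3/2 = ((3:ℕ):ℝ) by norm_num, Real.rpow_natCast]

lemma cap_main : ∀ a b : ℝ, 0 ≤ a → 0 ≤ b →
    (∏ s₁ ∈ ({-1, 1} : Finset ℝ), ∏ s₂ ∈ ({-1, 1} : Finset ℝ),
      (a ^ ((3 : ℝ)/2) + s₁ * b ^ ((3 : ℝ)/2) + s₂ * (a + b) ^ ((3 : ℝ)/2)))
      = a ^ 2 * b ^ 2 * (9 * a ^ 2 + 14 * a * b + 9 * b ^ 2) := by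
  intro a b ha hb
  have hne : (-1 : ℝ) ≠ 1 := by norm_num
  rw [Finset.prod_pair hne, Finset.prod_pair hne, Finset.prod_pair hne]
  set x := a ^ ((3 : ℝ)/2)
  set y := b ^ ((3 : ℝ)/2)
  set z := (a + b) ^ ((3 : ℝ)/2)
  have hx : x * x = a ^ 3 := sq_rpow_three_halves ha
  have hy : y * y = b ^ 3 := sq_rpow_three_halves hb
  have hz : z * z = (a + b) ^ 3 := sq_rpow_three_halves (by linarith)
  have key : (x + -1 * y + -1 * z) * (x + -1 * y + 1 * z) *
      ((x + 1 * y + -1 * z) * (x + 1 * y + 1 * z))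
      = (x * x + y * y - z * z) ^ 2 - 4 * (x * x) * (y * y) := by ring
  rw [key, hx, hy, hz]; ring

/-- For all `a, b ≥ 0`, the product over the four sign choices of
`a^{3/2} + s₁ b^{3/2} + s₂ (a+b)^{3/2}` equals `a² b² (9a² + 14ab + 9b²)`;
equivalently, for `ξ, η ≤ 0`, the product of
`|ξ|^{3/2} + s₁ |η|^{3/2} + s₂ |ξ+η|^{3/2}` equals `ξ² η² (9ξ² + 14ξη + 9η²)`. -/
theorem capillary_bilinear_resonance_product :
    (∀ a b : ℝ, 0 ≤ a → 0 ≤ b →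
      (∏ s₁ ∈ ({-1, 1} : Finset ℝ), ∏ s₂ ∈ ({-1, 1} : Finset ℝ),
        (a ^ ((3 : ℝ)/2) + s₁ * b ^ ((3 : ℝ)/2) + s₂ * (a + b) ^ ((3 : ℝ)/2)))
        = a ^ 2 * b ^ 2 * (9 * a ^ 2 + 14 * a * b + 9 * b ^ 2)) ∧
    (∀ ξ η : ℝ, ξ ≤ 0 → η ≤ 0 →
      (∏ s₁ ∈ ({-1, 1} : Finset ℝ), ∏ s₂ ∈ ({-1, 1} : Finset ℝ),
        (|ξ| ^ ((3 : ℝ)/2) + s₁ * |η| ^ ((3 : ℝ)/2) + s₂ * |ξ + η| ^ ((3 : ℝ)/2)))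
        = ξ ^ 2 * η ^ 2 * (9 * ξ ^ 2 + 14 * ξ * η + 9 * η ^ 2)) := by
  refine ⟨cap_main, ?_⟩
  intro ξ η hξ hη
  have h := cap_main (-ξ) (-η) (by linarith) (by linarith)
  rw [abs_of_nonpos hξ, abs_of_nonpos hη, abs_of_nonpos (by linarith : ξ + η ≤ 0)]
  rw [show -(ξ + η) = -ξ + -η by ring] at *
  rw [h]; ring
end

section
/- For all real numbers a, b with 0 ≤ a ≤ b, one has (3√2/8)·a·√b ≤ (a+b)^{3/2} − a^{3/2} − b^{3/2} ≤ (3/2)·a·√b. -/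
open Real

lemma rpow_three_halves (x : ℝ) (hx : 0 ≤ x) : x ^ ((3:ℝ)/2) = (Real.sqrt x)^3 := by
  rw [show (3:ℝ)/2 = (1/2) * 3 by norm_num, Real.rpow_mul hx, ← Real.sqrt_eq_rpow,
    ← Real.rpow_natCast (Real.sqrt x) 3]
  norm_num

/-- Quantitative bilinear non-resonance bound: for `0 ≤ a ≤ b`,
`(3√2/8)·a·√b ≤ (a+b)^{3/2} − a^{3/2} − b^{3/2} ≤ (3/2)·a·√b`. -/
theorem capillary_bilinear_nonresonance_bound (a b : ℝ) (ha : 0 ≤ a) (hab : a ≤ b) :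
    3 * Real.sqrt 2 / 8 * a * Real.sqrt b ≤
      (a + b) ^ ((3 : ℝ)/2) - a ^ ((3 : ℝ)/2) - b ^ ((3 : ℝ)/2) ∧
    (a + b) ^ ((3 : ℝ)/2) - a ^ ((3 : ℝ)/2) - b ^ ((3 : ℝ)/2) ≤
      3 / 2 * a * Real.sqrt b := by
  have hb : (0:ℝ) ≤ b := ha.trans hab
  have hab0 : (0:ℝ) ≤ a + b := by linarith
  set s := Real.sqrt a with hs
  set t := Real.sqrt b with ht
  set u := Real.sqrt (a + b) with hu
  have hs0 : 0 ≤ s := Real.sqrt_nonneg a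
  have ht0 : 0 ≤ t := Real.sqrt_nonneg b
  have hu0 : 0 ≤ u := Real.sqrt_nonneg _
  have hs2 : s ^ 2 = a := Real.sq_sqrt ha
  have ht2 : t ^ 2 = b := Real.sq_sqrt hb
  have hu2 : u ^ 2 = a + b := Real.sq_sqrt hab0
  have hst : s ≤ t := Real.sqrt_le_sqrt hab
  have hts : 0 ≤ t - s := by linarith
  rw [rpow_three_halves _ hab0, rpow_three_halves _ ha, rpow_three_halves _ hb, ← hs, ← ht, ← hu,
    ← hs2]
  have hu6 : (u^3)^2 = (s^2 + t^2)^3 := by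
    have h : u ^ 2 = s ^ 2 + t ^ 2 := by rw [hs2, ht2, hu2]
    calc (u^3)^2 = (u^2)^3 := by ring
      _ = (s^2 + t^2)^3 := by rw [h]
  have hu30 : 0 ≤ u^3 := pow_nonneg hu0 3
  have hA : 0 ≤ s^2 * t^3 * (t - s) := by positivity
  have hB : 0 ≤ s^3 * t^2 * (t - s) := by positivity
  have hC : 0 ≤ s^4 * t * (t - s) := by positivity
  have hD : 0 ≤ s^2 * t^2 * (t - s)^2 := by positivity
  have hM : 0 ≤ s^3 * t^3 := by positivity
  have hN : 0 ≤ s^5 * t := by positivity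
  constructor
  · -- lower bound
    have h2 : Real.sqrt 2 ≤ 22/15 := by
      nlinarith [Real.sq_sqrt (by norm_num : (0:ℝ) ≤ 2), Real.sqrt_nonneg 2]
    have hR0 : 0 ≤ s^3 + t^3 + (11/20) * s^2 * t := by positivity
    have hid : (s^2 + t^2)^3 - (s^3 + t^3 + (11/20) * s^2 * t)^2 =
        (121/400) * (s^2 * t^3 * (t - s)) + (11/10) * (s^4 * t * (t - s))
        + (639/400) * (s^2 * t^2 * (t - s)^2) + (599/400) * (s^3 * t^3) := by ring
    have hsq : (s^3 + t^3 + (11/20) * s^2 * t)^2 ≤ (u^3)^2 := by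
      rw [hu6]; linarith
    have key : s^3 + t^3 + (11/20) * s^2 * t ≤ u^3 :=
      (pow_le_pow_iff_left₀ hR0 hu30 two_ne_zero).mp hsq
    nlinarith [mul_nonneg (mul_nonneg hs0 hs0) ht0]
  · -- upper bound
    have hR0 : 0 ≤ s^3 + t^3 + (3/2) * s^2 * t := by positivity
    have hid : (s^3 + t^3 + (3/2) * s^2 * t)^2 - (s^2 + t^2)^3 =
        (3/4) * (s^3 * t^2 * (t - s)) + (5/4) * (s^3 * t^3) + 3 * (s^5 * t) := by ring
    have hsq : (u^3)^2 ≤ (s^3 + t^3 + (3/2) * s^2 * t)^2 := by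
      rw [hu6]; linarith
    have key : u^3 ≤ s^3 + t^3 + (3/2) * s^2 * t :=
      (pow_le_pow_iff_left₀ hu30 hR0 two_ne_zero).mp hsq
    linarith
end

section
/- Let ξ₁, ξ₂, ξ₃ < 0 be real, set ξ₀ = ξ₁ + ξ₂ − ξ₃, a = min(|ξ₁|, |ξ₂|), b = max(|ξ₁|, |ξ₂|). If |ξ₀| ≤ a/100, then | |ξ₀|^{3/2} + |ξ₁|^{3/2} + |ξ₂|^{3/2} − |ξ₃|^{3/2} | ≥ (1/2)·a·b^{1/2}. -/
lemma rpow32 (t : ℝ) (ht : 0 ≤ t) : t ^ ((3:ℝ)/2) = t * Real.sqrt t := by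
  rcases ht.eq_or_lt with h | h
  · simp [← h]
  · rw [show (3:ℝ)/2 = 1 + 1/2 by norm_num, Real.rpow_add h, Real.rpow_one,
      ← Real.sqrt_eq_rpow]

lemma mono32 (u v : ℝ) (hu : 0 ≤ u) (huv : u ≤ v) :
    u * Real.sqrt u ≤ v * Real.sqrt v :=
  mul_le_mul huv (Real.sqrt_le_sqrt huv) (Real.sqrt_nonneg _) (by linarith)

lemma lip32 (s ε : ℝ) (hε : 0 ≤ ε) (hεs : ε ≤ s) :
    s * Real.sqrt s - (s - ε) * Real.sqrt (s - ε) ≤ 3/2 * ε * Real.sqrt s := by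
  set u := Real.sqrt s with hu
  set v := Real.sqrt (s - ε) with hv
  have hu2 : u ^ 2 = s := Real.sq_sqrt (le_trans hε hεs)
  have hv2 : v ^ 2 = s - ε := Real.sq_sqrt (by linarith)
  have hvu : v ≤ u := Real.sqrt_le_sqrt (by linarith)
  have hv0 : 0 ≤ v := Real.sqrt_nonneg _
  nlinarith [mul_nonneg (mul_nonneg (sub_nonneg.2 hvu) (sub_nonneg.2 hvu))
    (by linarith : (0:ℝ) ≤ u + 2*v)]

set_option maxHeartbeats 1000000 in
lemma conv32 (a b : ℝ) (ha : 0 < a) (hab : a ≤ b) :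
    54/100 * a * Real.sqrt b ≤
      (a + b) * Real.sqrt (a + b) - a * Real.sqrt a - b * Real.sqrt b := by
  set p := Real.sqrt a with hp
  set q := Real.sqrt b with hq
  set r := Real.sqrt (a + b) with hr
  set s2 := Real.sqrt 2 with hs2d
  have hp2 : p ^ 2 = a := Real.sq_sqrt ha.le
  have hq2 : q ^ 2 = b := Real.sq_sqrt (by linarith)
  have hr2 : r ^ 2 = a + b := Real.sq_sqrt (by linarith)
  have hs2 : s2 ^ 2 = 2 := Real.sq_sqrt (by norm_num)
  have hp0 : 0 < p := Real.sqrt_pos.2 ha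
  have hq0 : 0 < q := Real.sqrt_pos.2 (by linarith)
  have hpq : p ≤ q := Real.sqrt_le_sqrt hab
  have hqr : q ≤ r := Real.sqrt_le_sqrt (by linarith)
  have hs2ub : s2 ≤ 1.415 := by nlinarith [Real.sqrt_nonneg 2]
  have hrub : r ≤ s2 * q := by
    have h := Real.sqrt_le_sqrt (show a + b ≤ 2 * b by linarith)
    rwa [Real.sqrt_mul (by norm_num) b] at h
  have hpos : (0:ℝ) < (1 + s2) * q := by nlinarith [Real.sqrt_nonneg 2]
  have h1 : (r - q) * (r + q) = p ^ 2 := by nlinarith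
  have h3 : p ^ 2 ≤ (r - q) * ((1 + s2) * q) := by
    nlinarith [mul_nonneg (sub_nonneg.2 hqr)
      (show (0:ℝ) ≤ (1 + s2) * q - (r + q) by linarith)]
  have hnn : (0:ℝ) ≤ p ^ 2 + 3 * q ^ 2 := by positivity
  have h2 : p ^ 2 * (p ^ 2 + 3 * q ^ 2) ≤ (r - q) * ((1 + s2) * q) * (p ^ 2 + 3 * q ^ 2) :=
    mul_le_mul_of_nonneg_right h3 hnn
  have h4 : (r - q) * (p ^ 2 + 3 * q ^ 2) ≤ r ^ 2 * r - q ^ 2 * q := by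
    nlinarith [mul_nonneg hq0.le (sq_nonneg (r - q))]
  have h6 : (r - q) * (p ^ 2 + 3 * q ^ 2) * ((1 + s2) * q) ≤
      (r ^ 2 * r - q ^ 2 * q) * ((1 + s2) * q) :=
    mul_le_mul_of_nonneg_right h4 hpos.le
  have hquad : (1 + s2) * (p * q + 54/100 * (q * q)) ≤ p ^ 2 + 3 * q ^ 2 := by
    nlinarith [sq_nonneg (2 * p - (1 + s2) * q), mul_nonneg (sq_nonneg q) (sub_nonneg.2 hs2ub)]
  have h5 : (1 + s2) * q * (p ^ 2 * p + 54/100 * p ^ 2 * q) ≤ p ^ 2 * (p ^ 2 + 3 * q ^ 2) := by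
    nlinarith [mul_le_mul_of_nonneg_left hquad (sq_nonneg p)]
  have h7 : (1 + s2) * q * (p ^ 2 * p + 54/100 * p ^ 2 * q) ≤
      (1 + s2) * q * (r ^ 2 * r - q ^ 2 * q) := by
    calc (1 + s2) * q * (p ^ 2 * p + 54/100 * p ^ 2 * q) ≤ p ^ 2 * (p ^ 2 + 3 * q ^ 2) := h5
      _ ≤ (r - q) * ((1 + s2) * q) * (p ^ 2 + 3 * q ^ 2) := h2
      _ = (r - q) * (p ^ 2 + 3 * q ^ 2) * ((1 + s2) * q) := by ring
      _ ≤ (r ^ 2 * r - q ^ 2 * q) * ((1 + s2) * q) := h6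
      _ = (1 + s2) * q * (r ^ 2 * r - q ^ 2 * q) := by ring
  have key : p ^ 2 * p + 54/100 * p ^ 2 * q ≤ r ^ 2 * r - q ^ 2 * q :=
    le_of_mul_le_mul_left h7 hpos
  have e1 : (a + b) * r = r ^ 2 * r := by rw [hr2]
  have e2 : a * p = p ^ 2 * p := by rw [hp2]
  have e3 : b * q = q ^ 2 * q := by rw [hq2]
  have e4 : a * q = p ^ 2 * q := by rw [hp2]
  clear_value p q r s2
  linarith [key]

/-- Quantitative trilinear non-resonance bound in the unbalanced configuration: for
`ξ₁, ξ₂, ξ₃ < 0`, with `ξ₀ = ξ₁ + ξ₂ − ξ₃`, `a = min(|ξ₁|,|ξ₂|)`, `b = max(|ξ₁|,|ξ₂|)`,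
if `|ξ₀| ≤ a/100` then `| |ξ₀|^{3/2} + |ξ₁|^{3/2} + |ξ₂|^{3/2} − |ξ₃|^{3/2} | ≥ (1/2)·a·√b`. -/
theorem capillary_trilinear_nonresonance_bound
    (ξ₁ ξ₂ ξ₃ : ℝ) (h₁ : ξ₁ < 0) (h₂ : ξ₂ < 0) (h₃ : ξ₃ < 0)
    (hsmall : |ξ₁ + ξ₂ - ξ₃| ≤ min |ξ₁| |ξ₂| / 100) :
    (1 / 2) * min |ξ₁| |ξ₂| * Real.sqrt (max |ξ₁| |ξ₂|) ≤
      abs (|ξ₁ + ξ₂ - ξ₃| ^ ((3 : ℝ)/2) + |ξ₁| ^ ((3 : ℝ)/2) + |ξ₂| ^ ((3 : ℝ)/2)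
        - |ξ₃| ^ ((3 : ℝ)/2)) := by
  have hx : 0 < |ξ₁| := abs_pos.2 h₁.ne
  have hy : 0 < |ξ₂| := abs_pos.2 h₂.ne
  set d := |ξ₁ + ξ₂ - ξ₃| with hd
  set a := min |ξ₁| |ξ₂| with ha
  set b := max |ξ₁| |ξ₂| with hb
  have ha0 : 0 < a := lt_min hx hy
  have hb0 : 0 < b := lt_of_lt_of_le ha0 (min_le_max)
  have hab : a ≤ b := min_le_max
  have hd0 : 0 ≤ d := abs_nonneg _
  have habsum : a + b = |ξ₁| + |ξ₂| := min_add_max _ _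
  have hz0 : 0 ≤ |ξ₃| := abs_nonneg _
  -- |ξ₃| ≥ |ξ₁| + |ξ₂| - d
  have hz : a + b - d ≤ |ξ₃| := by
    have e1 : |ξ₁| = -ξ₁ := abs_of_neg h₁
    have e2 : |ξ₂| = -ξ₂ := abs_of_neg h₂
    have e3 : |ξ₃| = -ξ₃ := abs_of_neg h₃
    have e4 : -d ≤ ξ₁ + ξ₂ - ξ₃ := neg_abs_le _
    rw [habsum]; linarith
  rw [rpow32 _ hd0, rpow32 _ hx.le, rpow32 _ hy.le, rpow32 _ hz0]
  have hsum : |ξ₁| * Real.sqrt |ξ₁| + |ξ₂| * Real.sqrt |ξ₂| =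
      a * Real.sqrt a + b * Real.sqrt b := by
    rcases le_total |ξ₁| |ξ₂| with h | h
    · rw [ha, hb, min_eq_left h, max_eq_right h]
    · rw [ha, hb, min_eq_right h, max_eq_left h]; ring
  have hds : d ≤ a + b := by linarith
  have hmono : (a + b - d) * Real.sqrt (a + b - d) ≤ |ξ₃| * Real.sqrt |ξ₃| :=
    mono32 _ _ (by linarith) hz
  have hlip := lip32 (a + b) d hd0 hds
  have hconv := conv32 a b ha0 hab
  have hQ0 : 0 ≤ Real.sqrt b := Real.sqrt_nonneg _
  have hs2ub : Real.sqrt 2 ≤ 1.415 := by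
    nlinarith [Real.sqrt_nonneg 2, Real.sq_sqrt (show (0:ℝ) ≤ 2 by norm_num)]
  have hsb : Real.sqrt (a + b) ≤ 1.415 * Real.sqrt b := by
    have h := Real.sqrt_le_sqrt (show a + b ≤ 2 * b by linarith)
    rw [Real.sqrt_mul (by norm_num) b] at h
    nlinarith
  have hbnd1 : d * Real.sqrt (a + b) ≤ a / 100 * (1.415 * Real.sqrt b) :=
    mul_le_mul hsmall hsb (Real.sqrt_nonneg _) (by positivity)
  have hbnd2 : d * Real.sqrt d ≤ a / 100 * Real.sqrt b := by
    have hsd : Real.sqrt d ≤ Real.sqrt b := Real.sqrt_le_sqrt (by linarith)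
    exact mul_le_mul hsmall hsd (Real.sqrt_nonneg _) (by positivity)
  have hneg : 1/2 * a * Real.sqrt b ≤
      -(d * Real.sqrt d + |ξ₁| * Real.sqrt |ξ₁| + |ξ₂| * Real.sqrt |ξ₂|
        - |ξ₃| * Real.sqrt |ξ₃|) := by
    clear_value d a b
    linarith [hsum, mul_nonneg ha0.le hQ0]
  exact le_trans hneg (neg_le_abs _)
end

section
/- Define D(ξ,η) = 9(ξ+η)² − 4ξη and, for (ξ,η) ≠ (0,0), the complex-valued symbols A^h(ξ,η) = i(3ξ³ − (3/2)ξ²η − 5ξη² − (9/2)η³)/D(ξ,η), B^h(ξ,η) = −i(ξ+η)·((9/4)(ξ+η)² − 2ξη)/D(ξ,η), C^h(ξ,η) = −(3/2)i(ξ+η)²/D(ξ,η). Then for all (ξ,η) ≠ (0,0): (a) 2η·B^h(ξ,η) − 2ξ²·C^h(ξ,η) − (ξ+η)·A^h(ξ,η) = 0; (b) (1/2)(ξ·A^h(ξ,η) + η·A^h(η,ξ)) + (ξ+η)²·C^h(ξ,η) = −i·ξη; (c) (1/2)(η²·A^h(ξ,η) + ξ²·A^h(η,ξ)) − (ξ+η)²·B^h(ξ,η)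 = (3i/4)·ξη·(ξ+η). -/
open Complex

/-! Clearing the common denominator `D(ξ,η) = 9ξ² + 14ξη + 9η² = 7(ξ+η)² + 2ξ² + 2η²`, which is
positive away from the origin and symmetric in `(ξ,η)`, turns each symbol equation into a
polynomial identity. -/

noncomputable section

namespace Capillary

def denom (x y : ℂ) : ℂ := 9 * (x + y) ^ 2 - 4 * x * y

def symbolA (x y : ℂ) : ℂ :=
  I * (3 * x ^ 3 - (3 / 2) * x ^ 2 * y - 5 * x * y ^ 2 - (9 / 2) * y ^ 3) / denom x y

def symbolB (x y : ℂ) : ℂ :=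
  -I * (x + y) * ((9 / 4) * (x + y) ^ 2 - 2 * x * y) / denom x y

def symbolC (x y : ℂ) : ℂ :=
  -(3 / 2) * I * (x + y) ^ 2 / denom x y

lemma denom_comm (x y : ℂ) : denom y x = denom x y := by
  unfold denom; ring

lemma real_denom_pos {ξ η : ℝ} (h : (ξ, η) ≠ (0, 0)) : 0 < 9 * (ξ + η) ^ 2 - 4 * ξ * η := by
  have hξη : ξ ≠ 0 ∨ η ≠ 0 := by
    by_contra! hc
    exact h (Prod.ext hc.1 hc.2)
  have hsq : 0 < ξ ^ 2 + η ^ 2 := by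
    rcases hξη with hξ | hη
    · positivity
    · positivity
  nlinarith [sq_nonneg (ξ + η)]

lemma denom_ofReal_ne_zero {ξ η : ℝ} (h : (ξ, η) ≠ (0, 0)) : denom ξ η ≠ 0 := by
  have := (real_denom_pos h).ne'
  unfold denom
  exact_mod_cast this

variable {x y : ℂ}

lemma symbols_linear_relation (hD : denom x y ≠ 0) :
    2 * y * symbolB x y - 2 * x ^ 2 * symbolC x y - (x + y) * symbolA x y = 0 := by
  unfold symbolA symbolB symbolC
  field_simp
  unfold denom
  ring

lemma symbols_cancel_Q_sq (hD : denom x y ≠ 0) :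
    (1 / 2) * (x * symbolA x y + y * symbolA y x) + (x + y) ^ 2 * symbolC x y
      = -I * x * y := by
  unfold symbolA symbolC
  rw [denom_comm x y]
  field_simp
  unfold denom
  ring

lemma symbols_cancel_W_mul_W (hD : denom x y ≠ 0) :
    (1 / 2) * (y ^ 2 * symbolA x y + x ^ 2 * symbolA y x) - (x + y) ^ 2 * symbolB x y
      = (3 * I / 4) * x * y * (x + y) := by
  unfold symbolA symbolB
  rw [denom_comm x y]
  field_simp
  unfold denom
  ring

end Capillary

end

open Capillary in
/-- The symbol equations defining the holomorphic part of the quadratic normal form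
transformation for capillary water waves: with `D(ξ,η) = 9(ξ+η)² − 4ξη` and the symbols
`A^h`, `B^h`, `C^h` as in the paper, the three symbol identities hold away from the origin. -/
theorem capillary_holomorphic_normal_form_symbols
    (Ah Bh Ch : ℝ → ℝ → ℂ)
    (hAh : ∀ ξ η : ℝ, (ξ, η) ≠ (0, 0) →
      Ah ξ η = Complex.I * (3 * (ξ:ℂ)^3 - (3/2) * (ξ:ℂ)^2 * (η:ℂ)
          - 5 * (ξ:ℂ) * (η:ℂ)^2 - (9/2) * (η:ℂ)^3)
        / (9 * ((ξ:ℂ) + (η:ℂ))^2 - 4 * (ξ:ℂ) * (η:ℂ)))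
    (hBh : ∀ ξ η : ℝ, (ξ, η) ≠ (0, 0) →
      Bh ξ η = -Complex.I * ((ξ:ℂ) + (η:ℂ)) * ((9/4) * ((ξ:ℂ) + (η:ℂ))^2 - 2 * (ξ:ℂ) * (η:ℂ))
        / (9 * ((ξ:ℂ) + (η:ℂ))^2 - 4 * (ξ:ℂ) * (η:ℂ)))
    (hCh : ∀ ξ η : ℝ, (ξ, η) ≠ (0, 0) →
      Ch ξ η = -(3/2) * Complex.I * ((ξ:ℂ) + (η:ℂ))^2
        / (9 * ((ξ:ℂ) + (η:ℂ))^2 - 4 * (ξ:ℂ) * (η:ℂ))) :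
    ∀ ξ η : ℝ, (ξ, η) ≠ (0, 0) →
      (2 * (η:ℂ) * Bh ξ η - 2 * (ξ:ℂ)^2 * Ch ξ η - ((ξ:ℂ) + (η:ℂ)) * Ah ξ η = 0) ∧
      ((1/2) * ((ξ:ℂ) * Ah ξ η + (η:ℂ) * Ah η ξ) + ((ξ:ℂ) + (η:ℂ))^2 * Ch ξ η
        = -Complex.I * (ξ:ℂ) * (η:ℂ)) ∧
      ((1/2) * ((η:ℂ)^2 * Ah ξ η + (ξ:ℂ)^2 * Ah η ξ) - ((ξ:ℂ) + (η:ℂ))^2 * Bh ξ η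
        = (3 * Complex.I / 4) * (ξ:ℂ) * (η:ℂ) * ((ξ:ℂ) + (η:ℂ))) := by
  intro ξ η h
  have h' : (η, ξ) ≠ (0, 0) := fun h0 => h (Prod.ext (congrArg Prod.snd h0) (congrArg Prod.fst h0))
  have hD := denom_ofReal_ne_zero h
  rw [hAh ξ η h, hAh η ξ h', hBh ξ η h, hCh ξ η h]
  exact ⟨symbols_linear_relation hD, symbols_cancel_Q_sq hD, symbols_cancel_W_mul_W hD⟩
end

section
/- Define E(ζ,η) = 9ζ² − 4ζη + 4η² and, for (ζ,η) ≠ (0,0), the complex-valued symbols A^a(ζ,η) = 3iζ(ζ² − (1/2)ζη + η²)/E(ζ,η), B^a(ζ,η) = −iζ((9/2)ζ² + (1/2)ζη + η²)/E(ζ,η), C^a(ζ,η) = −3iζ²/E(ζ,η), D^a(ζ,η) = −iζ((9/2)ζ² − 4ζη + 4η²)/E(ζ,η). Then for all (ζ,η) ≠ (0,0): (1) iη·B^a + iζ²·C^a + i(ζ−η)·A^a = ζη; (2) −iζ·B^a − iη²·C^a + i(ζ−η)·D^a = −ζη; (3) −iζ·A^a + iη·D^a − i(ζ−η)²·C^a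 = ζη; (4) −iη²·A^a + iζ²·D^a − i(ζ−η)²·B^a = (1/2)ζη(ζ+η), where all symbols are evaluated at (ζ,η). -/
/-! Away from the origin `E(ζ, η) = 8ζ² + (ζ − 2η)²` is positive, so after clearing the common
denominator `E` each symbol equation becomes a polynomial identity in `ζ, η` and `i`. Every term of
the left-hand sides carries exactly two factors of `i`, so the identities hold over any field of
characteristic other than two once `i² = −1`. -/

section SymbolEquations

variable {K : Type*} [Field K]

def mixedDenom (ζ η : K) : K := 9 * ζ ^ 2 - 4 * ζ * η + 4 * η ^ 2

def mixedSymbolA (i ζ η : K) : K := 3 * i * ζ * (ζ ^ 2 - (1 / 2) * ζ * η + η ^ 2) / mixedDenom ζ η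

def mixedSymbolB (i ζ η : K) : K :=
  -i * ζ * ((9 / 2) * ζ ^ 2 + (1 / 2) * ζ * η + η ^ 2) / mixedDenom ζ η

def mixedSymbolC (i ζ η : K) : K := -3 * i * ζ ^ 2 / mixedDenom ζ η

def mixedSymbolD (i ζ η : K) : K :=
  -i * ζ * ((9 / 2) * ζ ^ 2 - 4 * ζ * η + 4 * η ^ 2) / mixedDenom ζ η

theorem mixedSymbols_solve_symbol_equations [NeZero (2 : K)] {i : K} (hi : i ^ 2 = -1) {ζ η : K}
    (hE : mixedDenom ζ η ≠ 0) :
    let A := mixedSymbolA i ζ η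
    let B := mixedSymbolB i ζ η
    let C := mixedSymbolC i ζ η
    let D := mixedSymbolD i ζ η
    i * η * B + i * ζ ^ 2 * C + i * (ζ - η) * A = ζ * η ∧
      -(i * ζ * B) - i * η ^ 2 * C + i * (ζ - η) * D = -(ζ * η) ∧
      -(i * ζ * A) + i * η * D - i * (ζ - η) ^ 2 * C = ζ * η ∧
      -(i * η ^ 2 * A) + i * ζ ^ 2 * D - i * (ζ - η) ^ 2 * B = (1 / 2) * ζ * η * (ζ + η) := by
  simp only [mixedSymbolA, mixedSymbolB, mixedSymbolC, mixedSymbolD]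
  refine ⟨?_, ?_, ?_, ?_⟩ <;> field_simp <;> rw [hi, mixedDenom] <;> ring

end SymbolEquations

theorem mixedDenom_pos {ζ η : ℝ} (h : (ζ, η) ≠ (0, 0)) : 0 < mixedDenom ζ η := by
  have hsum : mixedDenom ζ η = 8 * ζ ^ 2 + (ζ - 2 * η) ^ 2 := by rw [mixedDenom]; ring
  rw [hsum]
  by_contra hle
  have hζ : ζ = 0 := by nlinarith [sq_nonneg (ζ - 2 * η)]
  have hη : η = 0 := by subst hζ; nlinarith
  exact h (by rw [hζ, hη])

theorem ofReal_mixedDenom (ζ η : ℝ) : ((mixedDenom ζ η : ℝ) : ℂ) = mixedDenom (ζ : ℂ) η := by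
  simp [mixedDenom]

/-- The symbol equations defining the mixed (holomorphic–antiholomorphic) part of the
quadratic normal form transformation for capillary water waves: with
`E(ζ,η) = 9ζ² − 4ζη + 4η²` and the symbols `A^a`, `B^a`, `C^a`, `D^a` as in the paper,
the four symbol identities hold away from the origin. -/
theorem capillary_mixed_normal_form_symbols
    (Aa Ba Ca Da : ℝ → ℝ → ℂ)
    (hAa : ∀ ζ η : ℝ, (ζ, η) ≠ (0, 0) →
      Aa ζ η = 3 * Complex.I * (ζ:ℂ) * ((ζ:ℂ)^2 - (1/2) * (ζ:ℂ) * (η:ℂ) + (η:ℂ)^2)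
        / (9 * (ζ:ℂ)^2 - 4 * (ζ:ℂ) * (η:ℂ) + 4 * (η:ℂ)^2))
    (hBa : ∀ ζ η : ℝ, (ζ, η) ≠ (0, 0) →
      Ba ζ η = -Complex.I * (ζ:ℂ) * ((9/2) * (ζ:ℂ)^2 + (1/2) * (ζ:ℂ) * (η:ℂ) + (η:ℂ)^2)
        / (9 * (ζ:ℂ)^2 - 4 * (ζ:ℂ) * (η:ℂ) + 4 * (η:ℂ)^2))
    (hCa : ∀ ζ η : ℝ, (ζ, η) ≠ (0, 0) →
      Ca ζ η = -3 * Complex.I * (ζ:ℂ)^2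
        / (9 * (ζ:ℂ)^2 - 4 * (ζ:ℂ) * (η:ℂ) + 4 * (η:ℂ)^2))
    (hDa : ∀ ζ η : ℝ, (ζ, η) ≠ (0, 0) →
      Da ζ η = -Complex.I * (ζ:ℂ) * ((9/2) * (ζ:ℂ)^2 - 4 * (ζ:ℂ) * (η:ℂ) + 4 * (η:ℂ)^2)
        / (9 * (ζ:ℂ)^2 - 4 * (ζ:ℂ) * (η:ℂ) + 4 * (η:ℂ)^2)) :
    ∀ ζ η : ℝ, (ζ, η) ≠ (0, 0) →
      (Complex.I * (η:ℂ) * Ba ζ η + Complex.I * (ζ:ℂ)^2 * Ca ζ η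
        + Complex.I * ((ζ:ℂ) - (η:ℂ)) * Aa ζ η = (ζ:ℂ) * (η:ℂ)) ∧
      (-(Complex.I * (ζ:ℂ) * Ba ζ η) - Complex.I * (η:ℂ)^2 * Ca ζ η
        + Complex.I * ((ζ:ℂ) - (η:ℂ)) * Da ζ η = -((ζ:ℂ) * (η:ℂ))) ∧
      (-(Complex.I * (ζ:ℂ) * Aa ζ η) + Complex.I * (η:ℂ) * Da ζ η
        - Complex.I * ((ζ:ℂ) - (η:ℂ))^2 * Ca ζ η = (ζ:ℂ) * (η:ℂ)) ∧
      (-(Complex.I * (η:ℂ)^2 * Aa ζ η) + Complex.I * (ζ:ℂ)^2 * Da ζ η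
        - Complex.I * ((ζ:ℂ) - (η:ℂ))^2 * Ba ζ η
        = (1/2) * (ζ:ℂ) * (η:ℂ) * ((ζ:ℂ) + (η:ℂ))) := by
  intro ζ η h
  have hE : mixedDenom (ζ : ℂ) η ≠ 0 := by
    rw [← ofReal_mixedDenom]
    exact_mod_cast (mixedDenom_pos h).ne'
  rw [hAa ζ η h, hBa ζ η h, hCa ζ η h, hDa ζ η h]
  exact mixedSymbols_solve_symbol_equations Complex.I_sq hE
end

section
/- Let a, b, c be nonnegative real numbers with c ≤ a + b. Then (a + b − c)^{3/2} + c^{3/2} = a^{3/2} + b^{3/2} if and only if c = a or c = b. -/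
open Set

/-- Characterization of resonant trilinear interactions with one conjugation:
for `a, b, c ≥ 0` with `c ≤ a + b`, `(a+b−c)^{3/2} + c^{3/2} = a^{3/2} + b^{3/2}`
if and only if `c = a` or `c = b`. -/
theorem capillary_trilinear_resonance_characterization
    (a b c : ℝ) (ha : 0 ≤ a) (hb : 0 ≤ b) (hc : 0 ≤ c) (hcab : c ≤ a + b) :
    (a + b - c) ^ ((3 : ℝ)/2) + c ^ ((3 : ℝ)/2) = a ^ ((3 : ℝ)/2) + b ^ ((3 : ℝ)/2)
      ↔ c = a ∨ c = b := by
  constructor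
  · intro h
    by_contra hcon
    push_neg at hcon
    obtain ⟨hca, hcb⟩ := hcon
    set g : ℝ → ℝ := fun x => (a + b - x) ^ ((3:ℝ)/2) + x ^ ((3:ℝ)/2) with hg
    have h1 : StrictConvexOn ℝ (Icc 0 (a+b)) (fun x : ℝ => x ^ ((3:ℝ)/2)) :=
      (strictConvexOn_rpow (by norm_num)).subset Icc_subset_Ici_self (convex_Icc _ _)
    have h2 : StrictConvexOn ℝ (Icc 0 (a+b)) (fun x : ℝ => (a+b-x) ^ ((3:ℝ)/2)) := by
      refine ⟨convex_Icc _ _, ?_⟩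
      intro x hx y hy hxy t s ht hs hts
      have hx' : a + b - x ∈ Icc (0:ℝ) (a+b) := ⟨by linarith [hx.2], by linarith [hx.1]⟩
      have hy' : a + b - y ∈ Icc (0:ℝ) (a+b) := ⟨by linarith [hy.2], by linarith [hy.1]⟩
      have hne : a + b - x ≠ a + b - y := fun h' => hxy (by linarith)
      have := h1.2 hx' hy' hne ht hs hts
      simp only [smul_eq_mul] at this ⊢
      have harg : t * (a + b - x) + s * (a + b - y) = a + b - (t * x + s * y) := by
        have : t + s = 1 := hts; nlinarith [this]
      rw [harg] at this
      exact this
    have hconv : StrictConvexOn ℝ (Icc 0 (a+b)) g := h2.add h1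
    have key : ∀ x y z : ℝ, x ∈ Icc 0 (a+b) → y ∈ Icc 0 (a+b) → z ∈ Icc 0 (a+b) →
        x < y → y < z → g x = g y → g y = g z → False := by
      intro x y z hx hy hz hxy hyz e1 e2
      have hzx : (0:ℝ) < z - x := by linarith
      set t := (z - y)/(z - x) with htdef
      have ht : 0 < t := div_pos (by linarith) hzx
      have ht1 : t < 1 := by rw [div_lt_one hzx]; linarith
      have hlt := hconv.2 hx hz (by linarith : x ≠ z) ht (by linarith : (0:ℝ) < 1 - t)
        (by ring)
      have harg : t • x + (1 - t) • z = y := by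
        simp only [smul_eq_mul, htdef]
        field_simp
        ring
      rw [harg] at hlt
      simp only [smul_eq_mul] at hlt
      nlinarith [hlt]
    have key3 : ∀ x y z : ℝ, x ∈ Icc 0 (a+b) → y ∈ Icc 0 (a+b) → z ∈ Icc 0 (a+b) →
        x ≠ y → x ≠ z → y ≠ z → g x = g y → g x = g z → False := by
      intro x y z hx hy hz hxy hxz hyz e1 e2
      rcases hxy.lt_or_gt with p1 | p1 <;> rcases hxz.lt_or_gt with p2 | p2 <;>
        rcases hyz.lt_or_gt with p3 | p3 <;>
      first
        | linarith
        | exact key x y z hx hy hz (by assumption) (by assumption) e1 (e1.symm.trans e2)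
        | exact key x z y hx hz hy (by assumption) (by assumption) e2 (e2.symm.trans e1)
        | exact key y x z hy hx hz (by assumption) (by assumption) e1.symm e2
        | exact key y z x hy hz hx (by assumption) (by assumption) (e1.symm.trans e2) e2.symm
        | exact key z x y hz hx hy (by assumption) (by assumption) e2.symm e1
        | exact key z y x hz hy hx (by assumption) (by assumption) (e2.symm.trans e1) e1.symm
    have hma : a ∈ Icc (0:ℝ) (a+b) := ⟨ha, by linarith⟩
    have hmb : b ∈ Icc (0:ℝ) (a+b) := ⟨hb, by linarith⟩
    have hmc : c ∈ Icc (0:ℝ) (a+b) := ⟨hc, hcab⟩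
    have hmd : a + b - c ∈ Icc (0:ℝ) (a+b) := ⟨by linarith, by linarith⟩
    have hga : g a = a ^ ((3:ℝ)/2) + b ^ ((3:ℝ)/2) := by
      simp only [hg]; rw [show a + b - a = b by ring]; ring
    have hgb : g b = a ^ ((3:ℝ)/2) + b ^ ((3:ℝ)/2) := by
      simp only [hg]; rw [show a + b - b = a by ring]
    have hgd : g (a + b - c) = g c := by
      simp only [hg]; rw [show a + b - (a + b - c) = c by ring]; ring
    by_cases hab : a = b
    · have hcd : c ≠ a + b - c := fun h' => hca (by linarith)
      have had : a ≠ a + b - c := fun h' => hcb (by linarith)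
      exact key3 c a (a + b - c) hmc hma hmd hca (by exact hcd) had
        (h.trans hga.symm) hgd.symm
    · exact key3 c a b hmc hma hmb hca hcb hab (h.trans hga.symm) (h.trans hgb.symm)
  · rintro (rfl | rfl)
    · rw [show c + b - c = b by ring]; ring
    · rw [show a + c - c = a by ring]
end

section
/- Let v ∈ ℝ, t₀ ≥ 1, M ≥ 0, and let γ : [t₀, ∞) → ℂ be differentiable and e : [t₀, ∞) → ℂ satisfy, for all t ≥ t₀, γ'(t) = −(8iv⁵/(81t))·γ(t)·|γ(t)|² + e(t) and |e(t)| ≤ M·t^{−19/18}. Then for all t ≥ t₀, |γ(t)| ≤ |γ(t₀)| + 18·M·t₀^{−1/18}. -/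
/-!
Writing `γ' = i a(t) γ + e` with the real coefficient `a = −(8v⁵/(81t))|γ|²`, the gauge
transform `φ = exp(−i ∫ a) γ` has `|φ| = |γ|` and `φ' = exp(−i ∫ a) e`, so the cubic term
disappears and `|γ(t)| − |γ(t₀)| ≤ ∫_{t₀}^t |e| ≤ 18 M t₀^{−1/18}`.
-/

open Complex Set

theorem HasDerivWithinAt.exp_neg_integral_mul_I_mul {f e : ℝ → ℂ} {a : ℝ → ℝ} {s : Set ℝ}
    {t₀ t : ℝ} (ha : Continuous a) (hf : HasDerivWithinAt f (I * a t * f t + e t) s t) :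
    HasDerivWithinAt (fun τ ↦ Complex.exp (↑(-∫ σ in t₀..τ, a σ) * I) * f τ)
      (Complex.exp (↑(-∫ σ in t₀..t, a σ) * I) * e t) s t := by
  have hθ : HasDerivWithinAt (fun τ ↦ -∫ σ in t₀..τ, a σ) (-a t) s t :=
    (ha.integral_hasStrictDerivAt t₀ t).hasDerivAt.hasDerivWithinAt.neg
  refine ((hθ.ofReal_comp.mul_const I).cexp.mul hf).congr_deriv ?_
  push_cast
  ring

theorem image_norm_le_of_deriv_right_eq_I_mul_add {f e : ℝ → ℂ} {a B B' : ℝ → ℝ} {t₀ x : ℝ}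
    (ha : Continuous a) (hf : ContinuousOn f (Icc t₀ x))
    (hf' : ∀ t ∈ Ico t₀ x, HasDerivWithinAt f (I * a t * f t + e t) (Ici t) t)
    (h₀ : ‖f t₀‖ ≤ B t₀) (hB : ContinuousOn B (Icc t₀ x))
    (hB' : ∀ t ∈ Ico t₀ x, HasDerivWithinAt B (B' t) (Ici t) t)
    (he : ∀ t ∈ Ico t₀ x, ‖e t‖ ≤ B' t) :
    ∀ ⦃t⦄, t ∈ Icc t₀ x → ‖f t‖ ≤ B t := by
  set θ : ℝ → ℝ := fun τ ↦ -∫ σ in t₀..τ, a σ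
  have hθ : Continuous θ :=
    (continuous_iff_continuousAt.2 fun t ↦
      (ha.integral_hasStrictDerivAt t₀ t).hasDerivAt.continuousAt).neg
  have hnorm : ∀ (r : ℝ) (z : ℂ), ‖exp (r * I) * z‖ = ‖z‖ := fun r z ↦ by
    rw [norm_mul, norm_exp_ofReal_mul_I, one_mul]
  have hφ := image_norm_le_of_norm_deriv_right_le_deriv_boundary'
    (f := fun τ ↦ exp (θ τ * I) * f τ)
    ((by fun_prop : Continuous fun τ ↦ exp (θ τ * I)).continuousOn.mul hf)
    (fun τ hτ ↦ HasDerivWithinAt.exp_neg_integral_mul_I_mul ha (hf' τ hτ)) (by rwa [hnorm]) hB hB'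
    (fun τ hτ ↦ by rw [hnorm]; exact he τ hτ)
  simpa only [hnorm] using hφ

theorem hasDerivAt_eighteen_mul_sub_rpow_neg_one_div_eighteen (t₀ : ℝ) {t : ℝ} (ht : 0 < t) :
    HasDerivAt (fun s ↦ 18 * (t₀ ^ (-(1 : ℝ) / 18) - s ^ (-(1 : ℝ) / 18)))
      (t ^ (-(19 : ℝ) / 18)) t := by
  refine ((Real.hasDerivAt_rpow_const (Or.inl ht.ne')).const_sub _ |>.const_mul 18).congr_deriv ?_
  norm_num
  ring

/-- Integrating the asymptotic wave-packet ODE `γ' = −(8iv⁵/(81t)) γ|γ|² + e(t)` with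
`|e(t)| ≤ M t^{−19/18}` on `[t₀, ∞)`, `t₀ ≥ 1`, gives the uniform bound
`|γ(t)| ≤ |γ(t₀)| + 18 M t₀^{−1/18}`. -/
theorem wave_packet_ode_uniform_bound
    (v t₀ M : ℝ) (ht₀ : 1 ≤ t₀) (hM : 0 ≤ M) (γ e : ℝ → ℂ)
    (hODE : ∀ t, t₀ ≤ t → HasDerivAt γ
      (-(8 * Complex.I * (v:ℂ)^5 / (81 * (t:ℂ))) * γ t * ((‖γ t‖ : ℂ))^2 + e t) t)
    (he : ∀ t, t₀ ≤ t → ‖e t‖ ≤ M * t ^ (-(19 : ℝ)/18)) :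
    ∀ t, t₀ ≤ t → ‖γ t‖ ≤ ‖γ t₀‖ + 18 * M * t₀ ^ (-(1 : ℝ)/18) := by
  intro x hx
  have ht₀pos : 0 < t₀ := by linarith
  have hγ : ContinuousOn γ (Ici t₀) := fun t ht ↦ (hODE t ht).continuousAt.continuousWithinAt
  set g : ℝ → ℝ := fun t ↦ -(8 * v ^ 5 / (81 * t)) * ‖γ t‖ ^ 2
  have hg : ContinuousOn g (Ici t₀) := by
    simp only [g]
    fun_prop (disch := intro t (ht : t₀ ≤ t); have := ht₀pos.trans_le ht; positivity)
  -- `g` extended by its value at `t₀` to the left of `t₀`, a coefficient continuous on `ℝ`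
  have ha : Continuous fun t ↦ g (max t t₀) :=
    hg.comp_continuous (by fun_prop) fun t ↦ le_max_right t t₀
  have hγ' : ∀ t ∈ Ico t₀ x,
      HasDerivWithinAt γ (I * g (max t t₀) * γ t + e t) (Ici t) t := by
    intro t ht
    refine (hODE t ht.1).hasDerivWithinAt.congr_deriv ?_
    simp only [g, max_eq_left ht.1]
    push_cast
    ring
  set B : ℝ → ℝ := fun t ↦ ‖γ t₀‖ + M * (18 * (t₀ ^ (-(1 : ℝ) / 18) - t ^ (-(1 : ℝ) / 18)))
  have hB : ∀ t ∈ Icc t₀ x, HasDerivAt B (M * t ^ (-(19 : ℝ) / 18)) t := fun t ht ↦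
    ((hasDerivAt_eighteen_mul_sub_rpow_neg_one_div_eighteen t₀
      (ht₀pos.trans_le ht.1)).const_mul M).const_add _
  have hγB := image_norm_le_of_deriv_right_eq_I_mul_add ha (hγ.mono Icc_subset_Ici_self) hγ'
    (by simp [B]) (fun t ht ↦ (hB t ht).continuousAt.continuousWithinAt)
    (fun t ht ↦ (hB t (Ico_subset_Icc_self ht)).hasDerivWithinAt) (fun t ht ↦ he t ht.1)
    ⟨hx, le_rfl⟩
  have hxr := Real.rpow_nonneg (ht₀pos.le.trans hx) (-(1 : ℝ) / 18)
  calc ‖γ x‖ ≤ B x := hγB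
    _ ≤ ‖γ t₀‖ + 18 * M * t₀ ^ (-(1 : ℝ) / 18) := by
      simp only [B]
      nlinarith [mul_nonneg hM hxr]
end

section
/- For every σ ∈ (0, 1/8) there exists a constant C = C(σ) such that for all t ≥ 1 and all α ∈ ℝ: ∑_{k=0}^{∞} 2^{kσ}·min( 2^{−k/2}, 2^{k/2}/(|α| + 2^{−k/2}·t) ) ≤ C·(|α| + t^{2/3})^{σ − 1/2}. -/
open Real Finset

/-! Put `M = |α| + t^{2/3}` and `x_k = 2^k / M`. The `k`-th term is at most
`2 M^{σ-1/2} min(x_k^{σ+1/2}, x_k^{σ-1/2})`: for `2^k ≥ M` this is the trivial bound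
`2^{k(σ-1/2)}`, and for `2^k ≤ M` the denominator `|α| + 2^{-k/2} t` is already `≳ M` (if
`t^{2/3}` dominates, then `2^{-k/2} t ≥ t / √M ≳ t^{2/3}`). Summed over `k`, `min(x_k^a, x_k^b)`
with `a > 0 > b` is two geometric series meeting where `2^k ≈ M`, hence bounded independently
of `M`. -/

section DyadicSum

variable {β M a b : ℝ}

lemma pow_div_rpow (hβ : 0 ≤ β) (hM : 0 ≤ M) (k : ℕ) (c : ℝ) :
    (β ^ k / M) ^ c = (β ^ c) ^ k / M ^ c := by
  rw [div_rpow (pow_nonneg hβ k) hM, rpow_pow_comm hβ]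

lemma summable_min_rpow (hβ : 1 < β) (hM : 0 < M) (hb : b < 0) :
    Summable fun k : ℕ ↦ min ((β ^ k / M) ^ a) ((β ^ k / M) ^ b) := by
  have hβb : β ^ b < 1 := rpow_lt_one_of_one_lt_of_neg hβ hb
  refine .of_nonneg_of_le (fun k ↦ by positivity) (fun k ↦ min_le_right _ _) ?_
  simp_rw [pow_div_rpow (by positivity) hM.le]
  exact (summable_geometric_of_lt_one (by positivity) hβb).div_const _

lemma tsum_min_rpow_le (hβ : 1 < β) (hM : 1 ≤ M) (ha : 0 < a) (hb : b < 0) :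
    ∑' k : ℕ, min ((β ^ k / M) ^ a) ((β ^ k / M) ^ b) ≤
      β ^ a / (β ^ a - 1) + 1 / (1 - β ^ b) := by
  have hβ0 : 0 ≤ β := by linarith
  have hM0 : 0 < M := by linarith
  have hβa : 1 < β ^ a := one_lt_rpow hβ ha
  have hβb : β ^ b < 1 := rpow_lt_one_of_one_lt_of_neg hβ hb
  obtain ⟨n, hn, hn'⟩ := exists_nat_pow_near hM hβ
  rw [← (summable_min_rpow hβ hM0 hb).sum_add_tsum_nat_add (n + 1)]
  gcongr ?_ + ?_
  · calc ∑ k ∈ range (n + 1), min ((β ^ k / M) ^ a) ((β ^ k / M) ^ b)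
        ≤ ∑ k ∈ range (n + 1), (β ^ a) ^ k / M ^ a :=
          sum_le_sum fun k _ ↦ (min_le_left _ _).trans_eq (pow_div_rpow hβ0 hM0.le k a)
      _ = ((β ^ a) ^ (n + 1) - 1) / (β ^ a - 1) / M ^ a := by
          rw [← sum_div, geom_sum_eq hβa.ne']
      _ ≤ (β ^ a) ^ (n + 1) / (β ^ a - 1) / M ^ a := by
          gcongr
          linarith
      _ = (β ^ n / M) ^ a * (β ^ a / (β ^ a - 1)) := by
          rw [pow_div_rpow hβ0 hM0.le]; ring
      _ ≤ β ^ a / (β ^ a - 1) := by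
          refine mul_le_of_le_one_left (div_nonneg (by positivity) (by linarith)) ?_
          exact rpow_le_one (by positivity) ((div_le_one hM0).2 hn) ha.le
  · have hgeom := summable_geometric_of_lt_one (by positivity) hβb
    calc ∑' i, min ((β ^ (i + (n + 1)) / M) ^ a) ((β ^ (i + (n + 1)) / M) ^ b)
        ≤ ∑' i : ℕ, (β ^ b) ^ i := by
          refine (summable_min_rpow hβ hM0 hb).comp_injective (add_left_injective _)
            |>.tsum_le_tsum (fun i ↦ (min_le_right _ _).trans ?_) hgeom
          rw [pow_add, mul_div_assoc, mul_rpow (by positivity) (by positivity),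
            ← rpow_pow_comm hβ0]
          refine mul_le_of_le_one_right (by positivity) ?_
          exact rpow_le_one_of_one_le_of_nonpos ((one_le_div hM0).2 hn'.le) hb.le
      _ = 1 / (1 - β ^ b) := by rw [tsum_geometric_of_lt_one (by positivity) hβb, one_div]

end DyadicSum

lemma min_inv_div_le {a u s : ℝ} (ha : 0 ≤ a) (hu : 0 < u) (hs : 0 < s) :
    min s⁻¹ (s / (a + s⁻¹ * u ^ 3)) ≤ 2 * min (s / (a + u ^ 2)) s⁻¹ := by
  have hM : 0 < a + u ^ 2 := by positivity
  rw [mul_min_of_nonneg _ _ zero_le_two]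
  refine le_min ?_ ((min_le_left _ _).trans (by linarith [inv_pos.2 hs]))
  rcases le_or_gt (a + u ^ 2) (s ^ 2) with hsM | hsM
  · refine (min_le_left _ _).trans ?_
    have : 1 ≤ s ^ 2 / (a + u ^ 2) := (one_le_div hM).2 hsM
    calc s⁻¹ ≤ s⁻¹ * (2 * (s ^ 2 / (a + u ^ 2))) := by
          refine le_mul_of_one_le_right (by positivity) (by linarith)
      _ = 2 * (s / (a + u ^ 2)) := by field_simp
  · refine (min_le_right _ _).trans ?_
    have key : s * (a + u ^ 2) ≤ 2 * (a * s + u ^ 3) := by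
      -- if `s > 2 u`, then `s ^ 2 < a + u ^ 2` forces `a > 3 u ^ 2`
      rcases le_or_gt s (2 * u) with hsu | hsu
      · nlinarith [mul_le_mul_of_nonneg_left hsu (sq_nonneg u)]
      · have hs2u : 0 < s * (s - 2 * u) * (s + 2 * u) := by
          have := sub_pos.2 hsu
          positivity
        nlinarith [mul_pos hs (sub_pos.2 hsM), pow_pos hu 3]
    calc s / (a + s⁻¹ * u ^ 3) = s ^ 2 / (a * s + u ^ 3) := by field_simp
      _ ≤ 2 * (s / (a + u ^ 2)) := by
        rw [div_le_iff₀ (by positivity)]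
        field_simp
        nlinarith

lemma mul_min_rpow_sq_div {M s : ℝ} (hM : 0 < M) (hs : 0 < s) (σ : ℝ) :
    M ^ (σ - 1 / 2) * min ((s ^ 2 / M) ^ (σ + 1 / 2)) ((s ^ 2 / M) ^ (σ - 1 / 2)) =
      (s ^ 2) ^ σ * min (s / M) s⁻¹ := by
  have hlow : M ^ (σ - 1 / 2) * (s ^ 2 / M) ^ (σ - 1 / 2) = (s ^ 2) ^ σ * s⁻¹ := by
    rw [← mul_rpow hM.le (by positivity), mul_div_cancel₀ _ hM.ne', rpow_sub (by positivity),
      ← sqrt_eq_rpow, sqrt_sq hs.le, div_eq_mul_inv]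
  have hhigh : M ^ (σ - 1 / 2) * (s ^ 2 / M) ^ (σ + 1 / 2) = (s ^ 2) ^ σ * (s / M) := by
    rw [show σ + 1 / 2 = (σ - 1 / 2) + 1 by ring, rpow_add (by positivity), rpow_one,
      ← mul_assoc, hlow]
    field_simp
  rw [mul_min_of_nonneg _ _ (rpow_nonneg hM.le _), hhigh, hlow,
    ← mul_min_of_nonneg _ _ (by positivity)]

lemma dyadic_term_le (σ α : ℝ) {t : ℝ} (ht : 0 < t) (k : ℕ) :
    (2 : ℝ) ^ ((k : ℝ) * σ) * min ((2 : ℝ) ^ (-(k : ℝ) / 2))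
        ((2 : ℝ) ^ ((k : ℝ) / 2) / (|α| + (2 : ℝ) ^ (-(k : ℝ) / 2) * t))
      ≤ 2 * (|α| + t ^ ((2 : ℝ) / 3)) ^ (σ - 1 / 2) *
        min ((2 ^ k / (|α| + t ^ ((2 : ℝ) / 3))) ^ (σ + 1 / 2))
          ((2 ^ k / (|α| + t ^ ((2 : ℝ) / 3))) ^ (σ - 1 / 2)) := by
  set u := t ^ ((1 : ℝ) / 3) with hu
  set s := (2 : ℝ) ^ ((k : ℝ) / 2) with hs
  have hu0 : 0 < u := by positivity
  have hs0 : 0 < s := by positivity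
  have ht3 : t = u ^ 3 := by rw [hu, ← rpow_natCast, ← rpow_mul ht.le]; norm_num
  have ht23 : t ^ ((2 : ℝ) / 3) = u ^ 2 := by
    rw [hu, ← rpow_natCast, ← rpow_mul ht.le]; norm_num
  have hs2 : (2 : ℝ) ^ k = s ^ 2 := by
    rw [hs, ← rpow_natCast, ← rpow_natCast, ← rpow_mul zero_le_two]; ring_nf
  have hsinv : (2 : ℝ) ^ (-(k : ℝ) / 2) = s⁻¹ := by
    rw [hs, ← rpow_neg zero_le_two, neg_div]
  have h2σ : (2 : ℝ) ^ ((k : ℝ) * σ) = (s ^ 2) ^ σ := by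
    rw [rpow_natCast_mul zero_le_two, hs2]
  rw [ht23, hsinv, h2σ, hs2, ht3, mul_assoc 2, mul_min_rpow_sq_div (by positivity) hs0,
    mul_left_comm]
  gcongr
  exact min_inv_div_le (abs_nonneg α) hu0 hs0

/-- Dyadic summation bound over low frequencies in the Klainerman–Sobolev estimates:
for `0 < σ < 1/8` there is `C` such that for all `t ≥ 1` and `α ∈ ℝ`,
`∑_{k≥0} 2^{kσ} min(2^{−k/2}, 2^{k/2}/(|α| + 2^{−k/2} t)) ≤ C (|α| + t^{2/3})^{σ−1/2}`. -/
theorem dyadic_low_frequency_summation (σ : ℝ) (hσ0 : 0 < σ) (hσ : σ < 1/8) :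
    ∃ C : ℝ, ∀ t : ℝ, 1 ≤ t → ∀ α : ℝ,
      (∑' k : ℕ, (2 : ℝ) ^ ((k : ℝ) * σ) *
          min ((2 : ℝ) ^ (-(k : ℝ)/2))
            ((2 : ℝ) ^ ((k : ℝ)/2) / (|α| + (2 : ℝ) ^ (-(k : ℝ)/2) * t)))
        ≤ C * (|α| + t ^ ((2 : ℝ)/3)) ^ (σ - 1/2) := by
  refine ⟨2 * ((2 : ℝ) ^ (σ + 1 / 2) / ((2 : ℝ) ^ (σ + 1 / 2) - 1) +
    1 / (1 - (2 : ℝ) ^ (σ - 1 / 2))), fun t ht α ↦ ?_⟩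
  have ht0 : 0 < t := by linarith
  set M := |α| + t ^ ((2 : ℝ) / 3)
  have hM : 1 ≤ M := by
    have := one_le_rpow ht (by norm_num : (0 : ℝ) ≤ 2 / 3)
    have := abs_nonneg α
    linarith
  have hsum := (summable_min_rpow (a := σ + 1 / 2) one_lt_two (by linarith : 0 < M)
    (by linarith : σ - 1 / 2 < 0)).mul_left (2 * M ^ (σ - 1 / 2))
  calc _ ≤ ∑' k : ℕ, 2 * M ^ (σ - 1 / 2) *
          min ((2 ^ k / M) ^ (σ + 1 / 2)) ((2 ^ k / M) ^ (σ - 1 / 2)) :=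
        (hsum.of_nonneg_of_le (fun k ↦ by positivity) (dyadic_term_le σ α ht0)).tsum_le_tsum
          (dyadic_term_le σ α ht0) hsum
    _ ≤ _ := by
        rw [tsum_mul_left, mul_right_comm]
        gcongr
        exact tsum_min_rpow_le one_lt_two hM (by linarith) (by linarith)
end
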